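/- arXiv:2312.15879 — 2 statements merged into one kernel-verified Lean document; each statement's English description precedes it below -/
import Mathlib

section
/- Suppose c > 0, a ≤ c, b ≤ c, and ab ≤ 0. Then the function r ↦ F(a, b; c; r) is decreasing on the interval (0, 1). -/
open Real

/-- Pochhammer symbol `(a)_k = Γ(a+k)/Γ(a)`. -/
noncomputable def Poch (a : ℝ) (k : ℕ) : ℝ := Real.Gamma (a + k) / Real.Gamma a

/-- Gauss hypergeometric function `F(a,b;c;x)`. -/
noncomputable def Hyp (a b c x : ℝ) : ℝ :=
  ∑' k : ℕ, Poch a k * Poch b k / Poch c k * x ^ k / (Nat.factorial k : ℝ)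

/-!
For `a ≤ 0 < b < c` Euler's integral
`F(a,b;c;x) = Γ(c)/(Γ(b)Γ(c-b)) ∫₀¹ (1 - x t)^(-a) t^(b-1) (1-t)^(c-b-1) dt`
writes `F` as an average of the functions `x ↦ (1 - x t)^(-a)`, each decreasing because `-a ≥ 0`.
It comes from integrating the binomial series `(1 - x t)^(-a) = ∑ (a)ₖ (x t)ᵏ / k!` termwise
against the beta weight, whose moments are `(b)ₖ / (c)ₖ`. For `b = c` one has `F = (1 - x)^(-a)`
outright, and when `a` or `b` is a pole of `Γ` the junk value `Γ = 0` there makes `F` vanish.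
Since `F` is symmetric in `a` and `b`, the hypothesis `a b ≤ 0` reduces to this case.
-/

open Set MeasureTheory

theorem Poch_eq_ascPochhammer_eval {a : ℝ} (ha : ∀ m : ℕ, a ≠ -m) (k : ℕ) :
    Poch a k = (ascPochhammer ℝ k).eval a := by
  induction k with
  | zero => simp [Poch, div_self (Gamma_ne_zero ha)]
  | succ k ih =>
    have hak : a + k ≠ 0 := fun h ↦ ha k (by linarith)
    rw [ascPochhammer_succ_eval, ← ih, Poch, Poch, Nat.cast_succ, ← add_assoc,
      Gamma_add_one hak]
    ring

theorem Poch_ne_zero {c : ℝ} (hc : ∀ m : ℕ, c ≠ -m) (k : ℕ) : Poch c k ≠ 0 := by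
  refine div_ne_zero (Gamma_ne_zero fun m h ↦ hc (m + k) ?_) (Gamma_ne_zero hc)
  push_cast
  linarith

theorem Poch_div_factorial_eq_choose {a : ℝ} (ha : ∀ m : ℕ, a ≠ -m) (k : ℕ) :
    Poch a k / k.factorial = Ring.choose (a + k - 1) k := by
  rw [Poch_eq_ascPochhammer_eval ha, ← Ring.multichoose_eq,
    ← Polynomial.ascPochhammer_smeval_eq_eval, ← Ring.factorial_nsmul_multichoose_eq_ascPochhammer,
    nsmul_eq_mul]
  have : (k.factorial : ℝ) ≠ 0 := by positivity
  field_simp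

theorem hasFPowerSeriesOnBall_one_sub_rpow_neg (a : ℝ) :
    HasFPowerSeriesOnBall (fun x ↦ (1 - x) ^ (-a))
      (.ofScalars ℝ fun n ↦ Ring.choose (a + n - 1) n) 0 1 := by
  refine (Real.one_div_one_sub_rpow_hasFPowerSeriesOnBall_zero a).congr fun x hx ↦ ?_
  have : 0 ≤ 1 - x := by
    have := abs_lt.mp (by simpa [enorm_eq_nnnorm, ← NNReal.coe_lt_one] using hx : |x| < 1)
    linarith
  simp [Real.rpow_neg this]

theorem hasSum_Poch_div_factorial_mul_pow {a x : ℝ} (ha : ∀ m : ℕ, a ≠ -m) (hx : |x| < 1) :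
    HasSum (fun k ↦ Poch a k / k.factorial * x ^ k) ((1 - x) ^ (-a)) := by
  have := (hasFPowerSeriesOnBall_one_sub_rpow_neg a).hasSum (y := x)
    (by simpa [enorm_eq_nnnorm, ← NNReal.coe_lt_one] using hx)
  simpa [FormalMultilinearSeries.ofScalars_apply_eq, Poch_div_factorial_eq_choose ha,
    mul_comm] using this

theorem summable_abs_Poch_div_factorial_mul_pow {a x : ℝ} (ha : ∀ m : ℕ, a ≠ -m)
    (hx : |x| < 1) : Summable fun k ↦ |Poch a k / k.factorial| * |x| ^ k := by
  have hr := (hasFPowerSeriesOnBall_one_sub_rpow_neg a).r_le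
  have := FormalMultilinearSeries.summable_norm_mul_pow _ (r := ‖x‖₊)
    (lt_of_lt_of_le (by simpa [← NNReal.coe_lt_one] using hx) hr)
  simpa [FormalMultilinearSeries.ofScalars_norm, Poch_div_factorial_eq_choose ha] using this

theorem Hyp_comm (a b c : ℝ) : Hyp a b c = Hyp b a c := by
  ext x
  exact tsum_congr fun k ↦ by ring

theorem Hyp_eq_zero_of_Gamma_eq_zero {a : ℝ} (b c : ℝ) (ha : Gamma a = 0) : Hyp a b c = 0 := by
  ext x
  simp [Hyp, Poch, ha]

theorem Hyp_self_right {a c x : ℝ} (ha : ∀ m : ℕ, a ≠ -m) (hc : ∀ m : ℕ, c ≠ -m)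
    (hx : |x| < 1) : Hyp a c c x = (1 - x) ^ (-a) := by
  rw [← (hasSum_Poch_div_factorial_mul_pow ha hx).tsum_eq, Hyp]
  refine tsum_congr fun k ↦ ?_
  rw [mul_div_cancel_right₀ _ (Poch_ne_zero hc k)]
  ring

theorem ofReal_rpow_mul_one_sub_rpow {u v t : ℝ} (ht : t ∈ Ioo 0 1) :
    ((t ^ (u - 1) * (1 - t) ^ (v - 1) : ℝ) : ℂ)
      = (t : ℂ) ^ ((u : ℂ) - 1) * (1 - (t : ℂ)) ^ ((v : ℂ) - 1) := by
  push_cast [Complex.ofReal_cpow ht.1.le, Complex.ofReal_cpow (sub_nonneg.2 ht.2.le)]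
  rfl

theorem integrableOn_rpow_mul_one_sub_rpow {u v : ℝ} (hu : 0 < u) (hv : 0 < v) :
    IntegrableOn (fun t : ℝ ↦ t ^ (u - 1) * (1 - t) ^ (v - 1)) (Ioo 0 1) := by
  have h := (Complex.betaIntegral_convergent (u := u) (v := v) (by simpa) (by simpa)).1
  refine IntegrableOn.congr_fun (h.mono_set Ioo_subset_Ioc_self).re (fun t ht ↦ ?_)
    measurableSet_Ioo
  simp [← ofReal_rpow_mul_one_sub_rpow ht]

theorem integral_rpow_mul_one_sub_rpow {u v : ℝ} (hu : 0 < u) (hv : 0 < v) :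
    ∫ t in Ioo 0 1, t ^ (u - 1) * (1 - t) ^ (v - 1) = Gamma u * Gamma v / Gamma (u + v) := by
  have h := Complex.betaIntegral_eq_Gamma_mul_div u v (by simpa) (by simpa)
  rw [Complex.betaIntegral, intervalIntegral.integral_of_le zero_le_one,
    integral_Ioc_eq_integral_Ioo,
    ← setIntegral_congr_fun measurableSet_Ioo fun t ht ↦ ofReal_rpow_mul_one_sub_rpow ht,
    integral_complex_ofReal] at h
  rw [← Complex.ofReal_add, Complex.Gamma_ofReal, Complex.Gamma_ofReal, Complex.Gamma_ofReal] at h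
  exact_mod_cast h

theorem Poch_div_Poch_eq_integral {b c : ℝ} (hb : 0 < b) (hbc : b < c) (k : ℕ) :
    Poch b k / Poch c k = Gamma c / (Gamma b * Gamma (c - b)) *
      ∫ t in Ioo 0 1, t ^ k * (t ^ (b - 1) * (1 - t) ^ (c - b - 1)) := by
  have hmoment : ∫ t in Ioo 0 1, t ^ k * (t ^ (b - 1) * (1 - t) ^ (c - b - 1))
      = Gamma (b + k) * Gamma (c - b) / Gamma (c + k) := by
    rw [show c + k = b + k + (c - b) by ring,
      ← integral_rpow_mul_one_sub_rpow (by positivity) (sub_pos.2 hbc)]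
    refine setIntegral_congr_fun measurableSet_Ioo fun t ht ↦ ?_
    rw [← rpow_natCast, ← mul_assoc, ← rpow_add ht.1]
    ring_nf
  have hc := hb.trans hbc
  have := Gamma_pos_of_pos hb
  have := Gamma_pos_of_pos (sub_pos.2 hbc)
  have := Gamma_pos_of_pos hc
  have := Gamma_pos_of_pos (by positivity : 0 < c + k)
  rw [hmoment, Poch, Poch]
  field_simp

theorem integrableOn_one_sub_mul_rpow_mul {a b c x : ℝ} (hb : 0 < b) (hbc : b < c)
    (hx : |x| < 1) :
    IntegrableOn (fun t ↦ (1 - x * t) ^ (-a) * (t ^ (b - 1) * (1 - t) ^ (c - b - 1)))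
      (Ioo 0 1) := by
  refine IntegrableOn.continuousOn_mul_of_subset ?_
    (integrableOn_rpow_mul_one_sub_rpow hb (sub_pos.2 hbc)) isCompact_Icc measurableSet_Ioo
    Ioo_subset_Icc_self
  refine ContinuousOn.rpow_const (by fun_prop) fun t ht ↦ Or.inl (ne_of_gt ?_)
  nlinarith [abs_lt.1 hx, ht.1, ht.2, le_abs_self x, neg_abs_le x]

theorem Hyp_eq_integral {a b c x : ℝ} (ha : ∀ m : ℕ, a ≠ -m) (hb : 0 < b) (hbc : b < c)
    (hx : |x| < 1) :
    Hyp a b c x = Gamma c / (Gamma b * Gamma (c - b)) *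
      ∫ t in Ioo 0 1, (1 - x * t) ^ (-a) * (t ^ (b - 1) * (1 - t) ^ (c - b - 1)) := by
  set w : ℝ → ℝ := fun t ↦ t ^ (b - 1) * (1 - t) ^ (c - b - 1)
  have hw : IntegrableOn w (Ioo 0 1) := integrableOn_rpow_mul_one_sub_rpow hb (sub_pos.2 hbc)
  have hw0 : ∀ t ∈ Ioo (0 : ℝ) 1, 0 ≤ w t := fun t ht ↦
    mul_nonneg (rpow_nonneg ht.1.le _) (rpow_nonneg (sub_nonneg.2 ht.2.le) _)
  have hxt : ∀ t ∈ Ioo (0 : ℝ) 1, |x * t| < 1 := fun t ht ↦ by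
    rw [abs_mul, abs_of_pos ht.1]
    nlinarith [abs_nonneg x, ht.1, ht.2]
  have hS := summable_abs_Poch_div_factorial_mul_pow ha hx
  have hsum : HasSum (fun k : ℕ ↦ ∫ t in Ioo 0 1, Poch a k / k.factorial * (x * t) ^ k * w t)
      (∫ t in Ioo 0 1, (1 - x * t) ^ (-a) * w t) := by
    refine hasSum_integral_of_dominated_convergence
      (fun k t ↦ |Poch a k / k.factorial| * |x| ^ k * w t) (fun k ↦ ?_) (fun k ↦ ?_)
      (.of_forall fun t ↦ hS.mul_right (w t)) ?_ ?_
    · exact (Measurable.aestronglyMeasurable (by fun_prop))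
    · filter_upwards [ae_restrict_mem measurableSet_Ioo] with t ht
      rw [norm_mul, norm_mul, Real.norm_of_nonneg (hw0 t ht), norm_pow, Real.norm_eq_abs,
        Real.norm_eq_abs, abs_mul, mul_pow, abs_of_pos ht.1]
      gcongr
      exacts [hw0 t ht,
        mul_le_of_le_one_right (pow_nonneg (abs_nonneg _) _) (pow_le_one₀ ht.1.le ht.2.le)]
    · simp_rw [tsum_mul_right]
      exact hw.const_mul _
    · filter_upwards [ae_restrict_mem measurableSet_Ioo] with t ht
      exact (hasSum_Poch_div_factorial_mul_pow ha (hxt t ht)).mul_right (w t)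
  rw [Hyp, ← hsum.tsum_eq, ← tsum_mul_left]
  refine tsum_congr fun k ↦ ?_
  simp_rw [mul_pow, mul_assoc, integral_const_mul]
  rw [mul_div_assoc (Poch a k), Poch_div_Poch_eq_integral hb hbc]
  ring

theorem antitoneOn_Hyp_of_lt {a b c : ℝ} (ha : ∀ m : ℕ, a ≠ -m) (ha0 : a ≤ 0) (hb : 0 < b)
    (hbc : b < c) : AntitoneOn (Hyp a b c) (Ioo (-1) 1) := by
  intro x hx y hy hxy
  rw [Hyp_eq_integral ha hb hbc (abs_lt.2 hx), Hyp_eq_integral ha hb hbc (abs_lt.2 hy)]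
  have := Gamma_pos_of_pos hb
  have := Gamma_pos_of_pos (sub_pos.2 hbc)
  have := Gamma_pos_of_pos (hb.trans hbc)
  refine mul_le_mul_of_nonneg_left (setIntegral_mono_on
    (integrableOn_one_sub_mul_rpow_mul hb hbc (abs_lt.2 hy))
    (integrableOn_one_sub_mul_rpow_mul hb hbc (abs_lt.2 hx)) measurableSet_Ioo fun t ht ↦ ?_)
    (by positivity)
  refine mul_le_mul_of_nonneg_right (rpow_le_rpow ?_ ?_ (by linarith))
    (mul_nonneg (rpow_nonneg ht.1.le _) (rpow_nonneg (sub_nonneg.2 ht.2.le) _))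
  · nlinarith [hy.1, hy.2, ht.1, ht.2]
  · nlinarith [ht.1]

theorem antitoneOn_Hyp {a b c : ℝ} (ha0 : a ≤ 0) (hb0 : 0 ≤ b) (hbc : b ≤ c) :
    AntitoneOn (Hyp a b c) (Ioo (-1) 1) := by
  by_cases hΓa : Gamma a = 0
  · rw [Hyp_eq_zero_of_Gamma_eq_zero b c hΓa]
    exact antitoneOn_const
  have ha : ∀ m : ℕ, a ≠ -m := fun m h ↦ hΓa ((Gamma_eq_zero_iff a).2 ⟨m, h⟩)
  obtain rfl | hb := hb0.eq_or_lt
  · rw [Hyp_comm, Hyp_eq_zero_of_Gamma_eq_zero a c Gamma_zero]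
    exact antitoneOn_const
  obtain rfl | hbc := hbc.eq_or_lt
  · have hb' : ∀ m : ℕ, b ≠ -m := fun m h ↦ (neg_nonpos.2 m.cast_nonneg).not_gt (h ▸ hb)
    intro x hx y hy hxy
    rw [Hyp_self_right ha hb' (abs_lt.2 hx), Hyp_self_right ha hb' (abs_lt.2 hy)]
    exact rpow_le_rpow (by linarith [hy.2]) (by linarith) (by linarith)
  exact antitoneOn_Hyp_of_lt ha ha0 hb hbc

theorem stmt2_general (a b c : ℝ) (hac : a ≤ c) (hbc : b ≤ c) (hab : a * b ≤ 0) :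
    AntitoneOn (fun r => Hyp a b c r) (Set.Ioo (0 : ℝ) 1) := by
  have hsub : Ioo (0 : ℝ) 1 ⊆ Ioo (-1) 1 := Ioo_subset_Ioo_left (by norm_num)
  rcases mul_nonpos_iff.1 hab with ⟨ha, hb⟩ | ⟨ha, hb⟩
  · rw [Hyp_comm]
    exact (antitoneOn_Hyp hb ha hac).mono hsub
  · exact (antitoneOn_Hyp ha hb hbc).mono hsub

theorem stmt2 (a b c : ℝ) (hc : 0 < c) (hac : a ≤ c) (hbc : b ≤ c) (hab : a * b ≤ 0) :
    AntitoneOn (fun r => Hyp a b c r) (Set.Ioo (0 : ℝ) 1) :=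
  stmt2_general a b c hac hbc hab
end

section
/- Suppose c > 0, a ≤ c, b ≤ c, and ab ≥ 0. Then the function r ↦ F(a, b; c; r) is increasing on the interval (0, 1). -/
open Real

/-!
Since `F' = (ab/c) F(a+1,b+1;c+1)`, it suffices that `F(a,b;c;x) ≥ 0` on `[0,1)` whenever
`c > 0` and `a, b ≤ c`. For `a, b ≥ 0` every term is nonnegative. For `b < 0` the contiguous
relation `-b F + (1-x) F' = -(b(c-a)/c) F(a,b+1;c+1)` says that
`(1-x)^b F(a,b;c;x)` has derivative `-(b(c-a)/c) (1-x)^(b-1) F(a,b+1;c+1;x)`, so nonnegativity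
passes from `(a,b+1,c+1)` to `(a,b,c)`; induction on `b` and then (by symmetry) on `a` finishes.
Convergence for `|x| < 1` comes from the radius of Mathlib's `ordinaryHypergeometricSeries`.
-/

open Set

theorem Real.forall_of_nonneg_of_add_one {p : ℝ → Prop} (nonneg : ∀ x, 0 ≤ x → p x)
    (step : ∀ x < 0, p (x + 1) → p x) (x : ℝ) : p x := by
  obtain ⟨n, hn⟩ := exists_nat_ge (-x)
  induction n generalizing x with
  | zero => exact nonneg x (by simpa using hn)
  | succ n ih =>
    by_cases hx : 0 ≤ x
    · exact nonneg x hx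
    · exact step x (not_le.1 hx) (ih (x + 1) (by push_cast at hn; linarith))

theorem monotoneOn_of_hasDerivAt_nonneg {D : Set ℝ} (hD : Convex ℝ D) {f f' : ℝ → ℝ}
    (hf : ∀ x ∈ D, HasDerivAt f (f' x) x) (hf' : ∀ x ∈ interior D, 0 ≤ f' x) :
    MonotoneOn f D :=
  monotoneOn_of_hasDerivWithinAt_nonneg hD (fun x hx => (hf x hx).continuousAt.continuousWithinAt)
    (fun x hx => (hf x (interior_subset hx)).hasDerivWithinAt) hf'

namespace Poch

/-- With `Γ` at a pole taking the value `0`, a nonpositive integer `a` gives `Poch a k = 0` for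
every `k` rather than a terminating sequence. -/
theorem eq_zero_of_Gamma_eq_zero {a : ℝ} (h : Gamma a = 0) (k : ℕ) : Poch a k = 0 := by
  rw [Poch, h, div_zero]

theorem zero_nonneg (a : ℝ) : 0 ≤ Poch a 0 := by
  rcases eq_or_ne (Gamma a) 0 with h | h <;> simp [Poch, h]

theorem pos {a : ℝ} (ha : 0 < a) (k : ℕ) : 0 < Poch a k :=
  div_pos (Gamma_pos_of_pos (by positivity)) (Gamma_pos_of_pos ha)

theorem nonneg {a : ℝ} (ha : 0 ≤ a) (k : ℕ) : 0 ≤ Poch a k := by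
  rcases ha.eq_or_lt with rfl | ha
  · rw [eq_zero_of_Gamma_eq_zero Gamma_zero]
  · exact (pos ha k).le

theorem succ (a : ℝ) (k : ℕ) : Poch a (k + 1) = (a + k) * Poch a k := by
  by_cases h : Gamma a = 0
  · simp [eq_zero_of_Gamma_eq_zero h]
  · have hak : a + k ≠ 0 := fun h0 => h ((Gamma_eq_zero_iff a).2 ⟨k, by linarith⟩)
    rw [Poch, Poch, Nat.cast_succ, ← add_assoc, Gamma_add_one hak, mul_div_assoc]

theorem succ' (a : ℝ) (k : ℕ) : Poch a (k + 1) = a * Poch (a + 1) k := by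
  rcases eq_or_ne a 0 with rfl | ha
  · rw [eq_zero_of_Gamma_eq_zero Gamma_zero, zero_mul]
  · rw [Poch, Poch, Gamma_add_one ha, ← mul_div_assoc, mul_div_mul_left _ _ ha]
    push_cast
    ring_nf

theorem eq_ascPochhammer_eval {a : ℝ} (ha : Gamma a ≠ 0) (k : ℕ) :
    Poch a k = (ascPochhammer ℝ k).eval a := by
  induction k with
  | zero => simp [Poch, ha]
  | succ k ih =>
    rw [succ, ih, ascPochhammer_succ_right]
    simp only [Polynomial.eval_mul, Polynomial.eval_add, Polynomial.eval_X,
      Polynomial.eval_natCast]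
    ring

end Poch

noncomputable def hypCoeff (a b c : ℝ) (k : ℕ) : ℝ :=
  Poch a k * Poch b k / Poch c k / (Nat.factorial k : ℝ)

theorem hyp_eq_tsum (a b c x : ℝ) : Hyp a b c x = ∑' k, hypCoeff a b c k * x ^ k :=
  tsum_congr fun k => by rw [hypCoeff]; ring

theorem hypCoeff_comm (a b c : ℝ) (k : ℕ) : hypCoeff a b c k = hypCoeff b a c k := by
  rw [hypCoeff, hypCoeff, mul_comm (Poch a k)]

theorem hyp_comm (a b c x : ℝ) : Hyp a b c x = Hyp b a c x := by
  simp only [hyp_eq_tsum, hypCoeff_comm a b]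

theorem hypCoeff_eq_zero_of_Gamma_eq_zero {a : ℝ} (ha : Gamma a = 0) (b c : ℝ) (k : ℕ) :
    hypCoeff a b c k = 0 := by
  rw [hypCoeff, Poch.eq_zero_of_Gamma_eq_zero ha, zero_mul, zero_div, zero_div]

theorem hypCoeff_eq_ordinaryHypergeometricCoefficient {a b c : ℝ} (ha : Gamma a ≠ 0)
    (hb : Gamma b ≠ 0) (hc : Gamma c ≠ 0) (k : ℕ) :
    hypCoeff a b c k = ordinaryHypergeometricCoefficient a b c k := by
  rw [hypCoeff, Poch.eq_ascPochhammer_eval ha, Poch.eq_ascPochhammer_eval hb,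
    Poch.eq_ascPochhammer_eval hc]
  ring

theorem summable_abs_hypCoeff_mul_pow (a b : ℝ) {c x : ℝ} (hc : 0 < c) (hx : |x| < 1) :
    Summable fun k => |hypCoeff a b c k| * |x| ^ k := by
  by_cases hab : Gamma a = 0 ∨ Gamma b = 0
  · have hzero : ∀ k, hypCoeff a b c k = 0 := by
      rcases hab with ha | hb
      · exact hypCoeff_eq_zero_of_Gamma_eq_zero ha b c
      · exact fun k => (hypCoeff_comm a b c k).trans (hypCoeff_eq_zero_of_Gamma_eq_zero hb a c k)
    simp [hzero]
  rw [not_or] at hab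
  have hc' := (Gamma_pos_of_pos hc).ne'
  have not_neg_nat : ∀ {s : ℝ}, Gamma s ≠ 0 → ∀ k : ℕ, (k : ℝ) ≠ -s :=
    fun h k hk => h ((Gamma_eq_zero_iff _).2 ⟨k, by linarith⟩)
  have hrad := ordinaryHypergeometricSeries_radius_eq_one ℝ a b c
    fun k => ⟨not_neg_nat hab.1 k, not_neg_nat hab.2 k, not_neg_nat hc' k⟩
  have hsum := (ordinaryHypergeometricSeries ℝ a b c).summable_norm_apply (x := x)
    (by rw [hrad]; simpa [edist_dist] using hx)
  refine hsum.congr fun k => ?_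
  rw [ordinaryHypergeometricSeries_apply_eq, norm_smul, norm_pow,
    hypCoeff_eq_ordinaryHypergeometricCoefficient hab.1 hab.2 hc']
  rfl

theorem succ_mul_hypCoeff_succ (a b : ℝ) {c : ℝ} (hc : 0 < c) (k : ℕ) :
    (k + 1) * hypCoeff a b c (k + 1) = a * b / c * hypCoeff (a + 1) (b + 1) (c + 1) k := by
  have hc1 : Poch (c + 1) k ≠ 0 := (Poch.pos (by linarith) k).ne'
  rw [hypCoeff, hypCoeff, Poch.succ' a, Poch.succ' b, Poch.succ' c, Nat.factorial_succ]
  push_cast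
  field_simp

theorem hypCoeff_contiguous (a b : ℝ) {c : ℝ} (hc : 0 < c) (k : ℕ) :
    (k + 1) * hypCoeff a b c (k + 1) - (b + k) * hypCoeff a b c k =
      -(b * (c - a) / c) * hypCoeff a (b + 1) (c + 1) k := by
  rcases eq_or_ne b 0 with rfl | hb
  · simp [hypCoeff_comm a 0, hypCoeff_eq_zero_of_Gamma_eq_zero Gamma_zero]
  have hck : Poch c k ≠ 0 := (Poch.pos hc k).ne'
  have hck' : c + k ≠ 0 := by positivity
  have hb1 : Poch (b + 1) k = (b + k) * Poch b k / b := by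
    rw [eq_div_iff hb, mul_comm, ← Poch.succ', Poch.succ]
  have hc1 : Poch (c + 1) k = (c + k) * Poch c k / c := by
    rw [eq_div_iff hc.ne', mul_comm, ← Poch.succ', Poch.succ]
  rw [hypCoeff, hypCoeff, hypCoeff, Poch.succ a, Poch.succ b, Poch.succ c, Nat.factorial_succ,
    hb1, hc1]
  push_cast
  field_simp
  ring

theorem hasSum_hyp (a b : ℝ) {c x : ℝ} (hc : 0 < c) (hx : |x| < 1) :
    HasSum (fun k => hypCoeff a b c k * x ^ k) (Hyp a b c x) := by
  rw [hyp_eq_tsum]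
  refine (Summable.of_norm ?_).hasSum
  simpa only [norm_mul, norm_pow, Real.norm_eq_abs] using summable_abs_hypCoeff_mul_pow a b hc hx

theorem hasSum_succ_mul_hypCoeff_succ (a b : ℝ) {c x : ℝ} (hc : 0 < c) (hx : |x| < 1) :
    HasSum (fun k : ℕ => (k + 1) * hypCoeff a b c (k + 1) * x ^ k)
      (a * b / c * Hyp (a + 1) (b + 1) (c + 1) x) := by
  simpa only [succ_mul_hypCoeff_succ a b hc, mul_assoc] using
    (hasSum_hyp (a + 1) (b + 1) (by linarith) hx).mul_left (a * b / c)

theorem hasDerivAt_hyp (a b : ℝ) {c x : ℝ} (hc : 0 < c) (hx : |x| < 1) :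
    HasDerivAt (fun y => Hyp a b c y) (a * b / c * Hyp (a + 1) (b + 1) (c + 1) x) x := by
  obtain ⟨r, hxr, hr1⟩ := exists_between hx
  have hr0 : 0 < r := (abs_nonneg x).trans_lt hxr
  -- up to the factor `|ab/c|` and a shift, this is the series of `F(a+1,b+1;c+1;r)`
  have hbound : Summable fun k => |hypCoeff a b c k| * (k * r ^ (k - 1)) := by
    have hr : |r| < 1 := by rwa [abs_of_pos hr0]
    refine (summable_nat_add_iff 1).1 <| ((summable_abs_hypCoeff_mul_pow (a + 1) (b + 1)
      (by linarith : 0 < c + 1) hr).mul_left |a * b / c|).congr fun k => ?_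
    have hk := congrArg abs (succ_mul_hypCoeff_succ a b hc k)
    rw [abs_mul, abs_mul, abs_of_nonneg (by positivity)] at hk
    push_cast
    rw [abs_of_pos hr0, ← mul_assoc, ← hk]
    ring
  have hderiv := hasDerivAt_tsum_of_isPreconnected hbound isOpen_Ioo isPreconnected_Ioo
    (fun k y _ => (hasDerivAt_pow k y).const_mul (hypCoeff a b c k))
    (fun k y hy => by
      rw [norm_mul, norm_mul, norm_pow, Real.norm_natCast, Real.norm_eq_abs]
      gcongr
      exact abs_le.2 ⟨hy.1.le, hy.2.le⟩)
    (show (0 : ℝ) ∈ Ioo (-r) r by simpa using hr0)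
    (hasSum_hyp a b hc (x := 0) (by simp)).summable (abs_lt.1 hxr)
  have hvalue : HasSum (fun k : ℕ => hypCoeff a b c k * (k * x ^ (k - 1)))
      (a * b / c * Hyp (a + 1) (b + 1) (c + 1) x) := by
    refine (hasSum_nat_add_iff' 1).1 ?_
    simpa [mul_comm, mul_left_comm, mul_assoc] using hasSum_succ_mul_hypCoeff_succ a b hc hx
  simpa only [← hyp_eq_tsum, hvalue.tsum_eq] using hderiv

theorem hyp_contiguous (a b : ℝ) {c x : ℝ} (hc : 0 < c) (hx : |x| < 1) :
    -b * Hyp a b c x + (1 - x) * (a * b / c * Hyp (a + 1) (b + 1) (c + 1) x) =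
      -(b * (c - a) / c) * Hyp a (b + 1) (c + 1) x := by
  have hF := hasSum_hyp a b hc hx
  have hD := hasSum_succ_mul_hypCoeff_succ a b hc hx
  have hxD : HasSum (fun k : ℕ => k * hypCoeff a b c k * x ^ k)
      (x * (a * b / c * Hyp (a + 1) (b + 1) (c + 1) x)) := by
    refine (hasSum_nat_add_iff' 1).1 ?_
    simpa [pow_succ, mul_comm, mul_left_comm, mul_assoc] using hD.mul_left x
  rw [sub_mul, one_mul]
  refine ((hF.mul_left (-b)).add (hD.sub hxD)).unique ?_
  convert (hasSum_hyp a (b + 1) (by linarith : 0 < c + 1) hx).mul_left (-(b * (c - a) / c))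
    using 1
  funext k
  linear_combination x ^ k * hypCoeff_contiguous a b hc k

theorem hasDerivAt_one_sub_rpow_mul_hyp (a b : ℝ) {c x : ℝ} (hc : 0 < c) (hx : |x| < 1) :
    HasDerivAt (fun y => (1 - y) ^ b * Hyp a b c y)
      (-(b * (c - a) / c) * ((1 - x) ^ (b - 1) * Hyp a (b + 1) (c + 1) x)) x := by
  have hx1 : 0 < 1 - x := by linarith [le_abs_self x]
  have hpow : HasDerivAt (fun y : ℝ => (1 - y) ^ b) (-(b * (1 - x) ^ (b - 1))) x := by
    simpa using ((hasDerivAt_id x).const_sub 1).rpow_const (p := b) (Or.inl hx1.ne')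
  refine (hpow.mul (hasDerivAt_hyp a b hc hx)).congr_deriv ?_
  rw [show (1 - x) ^ b = (1 - x) ^ (b - 1) * (1 - x) by
    rw [← rpow_add_one hx1.ne', sub_add_cancel]]
  linear_combination (1 - x) ^ (b - 1) * hyp_contiguous a b hc hx

theorem hyp_nonneg_of_nonneg {a b c x : ℝ} (ha : 0 ≤ a) (hb : 0 ≤ b) (hc : 0 < c) (hx : 0 ≤ x) :
    0 ≤ Hyp a b c x :=
  tsum_nonneg fun k => div_nonneg (mul_nonneg (div_nonneg
    (mul_nonneg (Poch.nonneg ha k) (Poch.nonneg hb k)) (Poch.pos hc k).le) (pow_nonneg hx k))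
    (Nat.cast_nonneg _)

theorem hyp_zero_nonneg (a b c : ℝ) : 0 ≤ Hyp a b c 0 := by
  rw [Hyp, tsum_eq_single 0 fun k hk => by simp [zero_pow hk]]
  simpa using div_nonneg (mul_nonneg (Poch.zero_nonneg a) (Poch.zero_nonneg b))
    (Poch.zero_nonneg c)

theorem hyp_nonneg_of_hyp_add_one_nonneg (a b : ℝ) {c : ℝ} (hc : 0 < c) (hac : a ≤ c)
    (hb : b < 0) (h : ∀ y ∈ Ico (0 : ℝ) 1, 0 ≤ Hyp a (b + 1) (c + 1) y) :
    ∀ x ∈ Ico (0 : ℝ) 1, 0 ≤ Hyp a b c x := by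
  have hmono : MonotoneOn (fun y => (1 - y) ^ b * Hyp a b c y) (Ico 0 1) := by
    refine monotoneOn_of_hasDerivAt_nonneg (convex_Ico 0 1)
      (fun y hy => hasDerivAt_one_sub_rpow_mul_hyp a b hc (abs_lt.2 ⟨by linarith [hy.1], hy.2⟩))
      fun y hy => ?_
    rw [interior_Ico] at hy
    have hcoef : 0 ≤ -(b * (c - a) / c) :=
      neg_nonneg.2 (div_nonpos_of_nonpos_of_nonneg
        (mul_nonpos_of_nonpos_of_nonneg hb.le (sub_nonneg.2 hac)) hc.le)
    exact mul_nonneg hcoef (mul_nonneg (rpow_nonneg (by linarith [hy.2]) _)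
      (h y (Ioo_subset_Ico_self hy)))
  intro x hx
  have h0x := hmono ⟨le_rfl, zero_lt_one⟩ hx hx.1
  simp only [sub_zero, one_rpow, one_mul] at h0x
  exact nonneg_of_mul_nonneg_right ((hyp_zero_nonneg a b c).trans h0x)
    (rpow_pos_of_pos (by linarith [hx.2]) b)

theorem hyp_nonneg_of_nonneg_left {a : ℝ} (ha : 0 ≤ a) (b : ℝ) :
    ∀ c, 0 < c → a ≤ c → b ≤ c → ∀ x ∈ Ico (0 : ℝ) 1, 0 ≤ Hyp a b c x := by
  induction b using Real.forall_of_nonneg_of_add_one with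
  | nonneg b hb => exact fun c hc _ _ x hx => hyp_nonneg_of_nonneg ha hb hc hx.1
  | step b hb ih =>
    exact fun c hc hac _ => hyp_nonneg_of_hyp_add_one_nonneg a b hc hac hb
      (ih (c + 1) (by linarith) (by linarith) (by linarith))

theorem hyp_nonneg (a b : ℝ) :
    ∀ c, 0 < c → a ≤ c → b ≤ c → ∀ x ∈ Ico (0 : ℝ) 1, 0 ≤ Hyp a b c x := by
  induction a using Real.forall_of_nonneg_of_add_one with
  | nonneg a ha => exact hyp_nonneg_of_nonneg_left ha b
  | step a ha ih =>
    intro c hc hac hbc x hx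
    rw [hyp_comm]
    refine hyp_nonneg_of_hyp_add_one_nonneg b a hc hbc ha (fun y hy => ?_) x hx
    rw [hyp_comm]
    exact ih (c + 1) (by linarith) (by linarith) (by linarith) y hy

theorem stmt3 (a b c : ℝ) (hc : 0 < c) (hac : a ≤ c) (hbc : b ≤ c) (hab : 0 ≤ a * b) :
    MonotoneOn (fun r => Hyp a b c r) (Set.Ioo (0 : ℝ) 1) := by
  refine monotoneOn_of_hasDerivAt_nonneg (convex_Ioo 0 1)
    (fun y hy => hasDerivAt_hyp a b hc (abs_lt.2 ⟨by linarith [hy.1], hy.2⟩)) fun y hy => ?_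
  rw [interior_Ioo] at hy
  exact mul_nonneg (div_nonneg hab hc.le) (hyp_nonneg (a + 1) (b + 1) (c + 1) (by linarith)
    (by linarith) (by linarith) y (Ioo_subset_Ico_self hy))
end
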